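/- arXiv:1107.4532 — 2 statements merged into one kernel-verified Lean document; each statement's English description precedes it below -/
import Mathlib

section
/- Let C be a polyhedral cone with non-empty interior in a finite dimensional real vector space V, and suppose C has exactly m faces (including {0} and C itself). Then: (i) for every order-preserving homogeneous map f : C → C, the cone spectrum σ_C(f) contains at most m − 1 elements; and (ii) there exists a continuous order-preserving homogeneous map g : C → C whose cone spectrum contains exactly m − 1 distinct elements. -/
open Filter Topology Set

noncomputable section

variable {V : Type*} [NormedAddCommGroup V] [NormedSpace ℝ V] [FiniteDimensional ℝ V]

/-- `C` is a closed cone in `V`: closed, convex, invariant under nonnegative scaling,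
and `C ∩ (-C) = {0}`. -/
def IsClosedCone (C : Set V) : Prop :=
  IsClosed C ∧ Convex ℝ C ∧ (∀ a : ℝ, 0 ≤ a → ∀ x ∈ C, a • x ∈ C) ∧
    ∀ x ∈ C, -x ∈ C → x = 0

/-- The partial order induced by the cone `C`: `x ≤ y` iff `y - x ∈ C`. -/
def coneLE (C : Set V) (x y : V) : Prop := y - x ∈ C

/-- `f` is homogeneous of degree one on `C`. -/
def IsHomog (C : Set V) (f : V → V) : Prop :=
  ∀ a : ℝ, 0 ≤ a → ∀ x ∈ C, f (a • x) = a • f x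

/-- `f` is order-preserving on `C` with respect to the cone order. -/
def IsOrdPres (C : Set V) (f : V → V) : Prop :=
  ∀ x ∈ C, ∀ y ∈ C, coneLE C x y → coneLE C (f x) (f y)

/-- `C` is a polyhedral cone: an intersection of finitely many closed half-spaces. -/
def IsPolyhedral (C : Set V) : Prop :=
  ∃ (m : ℕ) (φ : Fin m → V →ₗ[ℝ] ℝ), C = {x : V | ∀ i, 0 ≤ φ i x}

/-- The cone spectrum `σ_C(f) = {ρ ≥ 0 : f x = ρ • x for some x ∈ C, x ≠ 0}`. -/
def coneSpectrum (C : Set V) (f : V → V) : Set ℝ :=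
  {ρ : ℝ | 0 ≤ ρ ∧ ∃ x ∈ C, x ≠ 0 ∧ f x = ρ • x}

/-- `F` is a face of the cone `C`: a non-empty convex subset of `C` such that whenever
`x, y ∈ C` and `(1-λ)x + λy ∈ F` for some `0 < λ < 1`, then `x, y ∈ F`. -/
def IsFace (C F : Set V) : Prop :=
  F.Nonempty ∧ Convex ℝ F ∧ F ⊆ C ∧
    ∀ x ∈ C, ∀ y ∈ C, ∀ t : ℝ, 0 < t → t < 1 →
      (1 - t) • x + t • y ∈ F → x ∈ F ∧ y ∈ F

/-!
Write `C = {x | 0 ≤ φ i x for all i}` and let `Z(x) = {i | φ i x = 0}`. Every face of `C` is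
`{x ∈ C | Z(x₀) ⊆ Z(x)}` for a point `x₀` of the face with minimal zero set, so the faces other
than `{0}` correspond bijectively to the zero sets of the nonzero vectors of `C`.

(i) If `x, y` are eigenvectors with `Z(x) = Z(y)`, then `ε y ≤ x` and `δ x ≤ y` for some
`ε, δ > 0`; iterating `f` gives `ε δ σ ^ N ≤ ρ ^ N` for all `N`, so `σ ≤ ρ` and by symmetry
`ρ = σ`. The eigenvalue is thus a function of the zero set of its eigenvector.

(ii) With `q_J z = min_{i ∉ J} φ i z`, the map `g z = ∑_J q_J z • v_J` is continuous,
homogeneous and order-preserving as soon as every `v_J` lies in `C`. For a vector `y_I` with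
zero set `I`, `q_J y_I = 0` unless `I ⊆ J`, so `g y_I = ρ_I • y_I` can be solved for `v_I` by
recursion from the larger zero sets down, choosing `ρ_I` large enough for `v_I ∈ C` and with
pairwise distinct fractional parts.
-/

section PolyhedralCone

variable {ι E : Type*} [AddCommGroup E] [Module ℝ E]

def coneOf (φ : ι → E →ₗ[ℝ] ℝ) : Set E := {x | ∀ i, 0 ≤ φ i x}

variable {φ : ι → E →ₗ[ℝ] ℝ}

theorem zero_mem_coneOf : (0 : E) ∈ coneOf φ := fun i => by simp

theorem add_mem_coneOf {x y : E} (hx : x ∈ coneOf φ) (hy : y ∈ coneOf φ) :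
    x + y ∈ coneOf φ :=
  fun i => by simpa only [map_add] using add_nonneg (hx i) (hy i)

theorem smul_mem_coneOf {a : ℝ} (ha : 0 ≤ a) {x : E} (hx : x ∈ coneOf φ) : a • x ∈ coneOf φ :=
  fun i => by simpa only [map_smul, smul_eq_mul] using mul_nonneg ha (hx i)

theorem nonneg_of_smul_mem_coneOf (hpt : ∀ x ∈ coneOf φ, -x ∈ coneOf φ → x = 0) {x : E}
    (hx : x ∈ coneOf φ) (hx0 : x ≠ 0) {a : ℝ} (hax : a • x ∈ coneOf φ) : 0 ≤ a := by
  by_contra! ha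
  have hneg : -x ∈ coneOf φ := by
    simpa [smul_smul, inv_mul_cancel₀ ha.ne] using
      smul_mem_coneOf (inv_nonneg.2 (neg_nonneg.2 ha.le)) hax
  exact hx0 (hpt x hx hneg)

variable (φ) in
def minCoord (s : Finset ι) (z : E) : ℝ := if h : s.Nonempty then s.inf' h fun i => φ i z else 0

theorem minCoord_nonneg {s : Finset ι} {z : E} (hz : z ∈ coneOf φ) : 0 ≤ minCoord φ s z := by
  unfold minCoord
  split_ifs with hs
  · exact (Finset.le_inf'_iff hs _).2 fun i _ => hz i
  · exact le_rfl

theorem minCoord_mono {s : Finset ι} {z w : E} (h : ∀ i, φ i z ≤ φ i w) :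
    minCoord φ s z ≤ minCoord φ s w := by
  unfold minCoord
  split_ifs with hs
  · exact Finset.inf'_mono_fun fun i _ => h i
  · exact le_rfl

theorem minCoord_smul {s : Finset ι} {a : ℝ} (ha : 0 ≤ a) (z : E) :
    minCoord φ s (a • z) = a * minCoord φ s z := by
  unfold minCoord
  split_ifs with hs
  · rw [Finset.apply_inf'_eq_inf'_comp hs (a * ·) fun x y => mul_min_of_nonneg x y ha]
    simp
  · simp

theorem minCoord_eq_zero {s : Finset ι} {z : E} (hz : z ∈ coneOf φ) {i : ι} (hi : i ∈ s)
    (hzi : φ i z = 0) : minCoord φ s z = 0 := by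
  refine (minCoord_nonneg hz).antisymm' ?_
  rw [minCoord, dif_pos ⟨i, hi⟩]
  exact (Finset.inf'_le _ hi).trans hzi.le

theorem minCoord_pos {s : Finset ι} (hs : s.Nonempty) {z : E} (hz : ∀ i ∈ s, 0 < φ i z) :
    0 < minCoord φ s z := by
  rw [minCoord, dif_pos hs]
  exact (Finset.lt_inf'_iff hs).2 hz

variable [Fintype ι]

variable (φ) in
def zeroSet (x : E) : Finset ι := {i | φ i x = 0}

@[simp]
theorem mem_zeroSet {x : E} {i : ι} : i ∈ zeroSet φ x ↔ φ i x = 0 := by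
  simp [zeroSet]

theorem zeroSet_add [DecidableEq ι] {x y : E} (hx : x ∈ coneOf φ) (hy : y ∈ coneOf φ) :
    zeroSet φ (x + y) = zeroSet φ x ∩ zeroSet φ y := by
  ext i
  simp only [mem_zeroSet, Finset.mem_inter, map_add]
  constructor
  · intro h
    constructor <;> linarith [hx i, hy i]
  · rintro ⟨h₁, h₂⟩
    rw [h₁, h₂, add_zero]

theorem exists_sub_smul_mem_coneOf {x y : E} (hx : x ∈ coneOf φ)
    (h : zeroSet φ x ⊆ zeroSet φ y) : ∃ ε : ℝ, 0 < ε ∧ x - ε • y ∈ coneOf φ := by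
  have hsmall : ∀ i, ∀ᶠ ε in 𝓝[>] (0 : ℝ), ε * φ i y ≤ φ i x := by
    intro i
    rcases (hx i).eq_or_lt with hxi | hxi
    · have hyi : φ i y = 0 := mem_zeroSet.1 (h (mem_zeroSet.2 hxi.symm))
      simp [hyi, ← hxi]
    · have hlim : Tendsto (fun ε : ℝ => ε * φ i y) (𝓝[>] 0) (𝓝 0) := by
        simpa using ((continuous_mul_const (φ i y)).tendsto 0).mono_left nhdsWithin_le_nhds
      exact hlim.eventually (ge_mem_nhds hxi)
  obtain ⟨ε, hε, hεpos⟩ := ((eventually_all.2 hsmall).and self_mem_nhdsWithin).exists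
  exact ⟨ε, hεpos, fun i => by simpa [sub_nonneg] using hε i⟩

variable (φ) in
def exposedFace (I : Finset ι) : Set E := {x | x ∈ coneOf φ ∧ I ⊆ zeroSet φ x}

theorem zero_mem_exposedFace {I : Finset ι} : (0 : E) ∈ exposedFace φ I :=
  ⟨zero_mem_coneOf, fun i _ => by simp⟩

theorem exposedFace_anti {I J : Finset ι} (h : I ⊆ J) : exposedFace φ J ⊆ exposedFace φ I :=
  fun _ hx => ⟨hx.1, h.trans hx.2⟩

theorem add_mem_exposedFace [DecidableEq ι] {I : Finset ι} {x y : E} (hx : x ∈ exposedFace φ I)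
    (hy : y ∈ exposedFace φ I) : x + y ∈ exposedFace φ I := by
  refine ⟨add_mem_coneOf hx.1 hy.1, ?_⟩
  rw [zeroSet_add hx.1 hy.1]
  exact Finset.subset_inter hx.2 hy.2

theorem smul_mem_exposedFace {I : Finset ι} {a : ℝ} (ha : 0 ≤ a) {x : E}
    (hx : x ∈ exposedFace φ I) : a • x ∈ exposedFace φ I :=
  ⟨smul_mem_coneOf ha hx.1, fun i hi => by simp [mem_zeroSet.1 (hx.2 hi)]⟩

theorem sum_smul_mem_exposedFace [DecidableEq ι] {κ : Type*} (s : Finset κ) {I : Finset ι}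
    {a : κ → ℝ} {v : κ → E} (ha : ∀ k ∈ s, 0 ≤ a k) (hv : ∀ k ∈ s, v k ∈ exposedFace φ I) :
    ∑ k ∈ s, a k • v k ∈ exposedFace φ I :=
  Finset.sum_induction _ (· ∈ exposedFace φ I) (fun _ _ => add_mem_exposedFace)
    zero_mem_exposedFace fun k hk => smul_mem_exposedFace (ha k hk) (hv k hk)

theorem exposedFace_univ (hpt : ∀ x ∈ coneOf φ, -x ∈ coneOf φ → x = 0) :
    exposedFace φ Finset.univ = {0} := by
  ext x
  refine ⟨fun hx => hpt x hx.1 fun i => ?_, ?_⟩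
  · simp [mem_zeroSet.1 (hx.2 (Finset.mem_univ i))]
  · rintro rfl
    exact zero_mem_exposedFace

variable (φ) in
def zeroPatterns : Set (Finset ι) := zeroSet φ '' (coneOf φ \ {0})

theorem compl_nonempty_of_mem_zeroPatterns [DecidableEq ι]
    (hpt : ∀ x ∈ coneOf φ, -x ∈ coneOf φ → x = 0) {I : Finset ι} (hI : I ∈ zeroPatterns φ) :
    Iᶜ.Nonempty := by
  obtain ⟨x, ⟨hx, hx0⟩, rfl⟩ := hI
  rw [Finset.nonempty_iff_ne_empty, Ne, Finset.compl_eq_empty_iff]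
  intro h
  apply hx0
  have hx' : x ∈ exposedFace φ Finset.univ := ⟨hx, h ▸ subset_rfl⟩
  rwa [exposedFace_univ hpt] at hx'

end PolyhedralCone

section Faces

variable {E : Type*} [NormedAddCommGroup E] [NormedSpace ℝ E] {C F : Set E}

theorem IsFace.zero_mem (hC : ∀ a : ℝ, 0 ≤ a → ∀ x ∈ C, a • x ∈ C) (hF : IsFace C F) :
    (0 : E) ∈ F := by
  obtain ⟨⟨x, hx⟩, -, hFC, hext⟩ := hF
  have h0C : (0 : E) ∈ C := by simpa using hC 0 le_rfl x (hFC hx)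
  refine (hext _ (hC 2 (by norm_num) x (hFC hx)) 0 h0C (1 / 2) (by norm_num) (by norm_num) ?_).2
  convert hx using 1
  module

theorem IsFace.smul_mem (hC : ∀ a : ℝ, 0 ≤ a → ∀ x ∈ C, a • x ∈ C) (hF : IsFace C F) {x : E}
    (hx : x ∈ F) {a : ℝ} (ha : 0 ≤ a) : a • x ∈ F := by
  have h0 := hF.zero_mem hC
  obtain ⟨-, hconv, hFC, hext⟩ := hF
  rcases le_or_gt a 1 with ha1 | ha1
  · simpa using hconv hx h0 ha (sub_nonneg.2 ha1) (add_sub_cancel a 1)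
  · -- `x` lies strictly between `a • x` and `0`
    refine (hext _ (hC a ha x (hFC hx)) 0 (hFC h0) (1 - a⁻¹) (by simp [inv_lt_one_of_one_lt₀ ha1])
      (by simp [inv_pos.2 (by linarith : (0:ℝ) < a)]) ?_).1
    convert hx using 1
    simp [smul_smul, (by linarith : (0:ℝ) < a).ne']

theorem IsFace.add_mem (hC : ∀ a : ℝ, 0 ≤ a → ∀ x ∈ C, a • x ∈ C) (hF : IsFace C F) {x y : E}
    (hx : x ∈ F) (hy : y ∈ F) : x + y ∈ F := by
  have hmid := hF.2.1 hx hy (by norm_num : (0 : ℝ) ≤ 1 / 2) (by norm_num : (0 : ℝ) ≤ 1 / 2)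
    (by norm_num)
  convert hF.smul_mem hC hmid (by norm_num : (0 : ℝ) ≤ 2) using 1
  module

variable {ι : Type*} [Fintype ι] {φ : ι → E →ₗ[ℝ] ℝ}

theorem isFace_exposedFace [DecidableEq ι] (I : Finset ι) :
    IsFace (coneOf φ) (exposedFace φ I) := by
  refine ⟨⟨0, zero_mem_exposedFace⟩, ?_, fun _ hx => hx.1, ?_⟩
  · intro x hx y hy a b ha hb _
    exact add_mem_exposedFace (smul_mem_exposedFace ha hx) (smul_mem_exposedFace hb hy)
  · intro x hx y hy t ht0 ht1 hmem
    have hzero : ∀ i ∈ I, φ i x = 0 ∧ φ i y = 0 := by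
      intro i hi
      have h := mem_zeroSet.1 (hmem.2 hi)
      simp only [map_add, map_smul, smul_eq_mul] at h
      have := hx i
      have := hy i
      constructor <;> nlinarith
    exact ⟨⟨hx, fun i hi => mem_zeroSet.2 (hzero i hi).1⟩,
      ⟨hy, fun i hi => mem_zeroSet.2 (hzero i hi).2⟩⟩

theorem IsFace.mem_of_zeroSet_subset (hF : IsFace (coneOf φ) F) {x y : E} (hx : x ∈ F)
    (hy : y ∈ coneOf φ) (h : zeroSet φ x ⊆ zeroSet φ y) : y ∈ F := by
  have hC : ∀ a : ℝ, 0 ≤ a → ∀ z ∈ coneOf φ, a • z ∈ coneOf φ := fun _ ha _ => smul_mem_coneOf ha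
  obtain ⟨ε, hε, hxy⟩ := exists_sub_smul_mem_coneOf (hF.2.2.1 hx) h
  have hmid := hF.2.2.2 _ (hC 2 (by norm_num) _ hxy) _ (hC (2 * ε) (by positivity) y hy) (1 / 2)
    (by norm_num) (by norm_num) (by convert hx using 1; module)
  have hy' := hF.smul_mem hC hmid.2 (by positivity : (0 : ℝ) ≤ (2 * ε)⁻¹)
  rwa [smul_smul, inv_mul_cancel₀ (by positivity), one_smul] at hy'

theorem IsFace.exists_eq_exposedFace [DecidableEq ι] (hF : IsFace (coneOf φ) F) :
    ∃ x ∈ F, F = exposedFace φ (zeroSet φ x) := by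
  have hC : ∀ a : ℝ, 0 ≤ a → ∀ z ∈ coneOf φ, a • z ∈ coneOf φ := fun _ ha _ => smul_mem_coneOf ha
  obtain ⟨I, hImin⟩ := (zeroSet φ '' F).toFinite.exists_minimal (hF.1.image _)
  obtain ⟨x, hxF, rfl⟩ := hImin.prop
  refine ⟨x, hxF, Set.ext fun y => ⟨fun hy => ⟨hF.2.2.1 hy, ?_⟩,
    fun hy => hF.mem_of_zeroSet_subset hxF hy.1 hy.2⟩⟩
  have hsum := zeroSet_add (hF.2.2.1 hxF) (hF.2.2.1 hy)
  have heq := hImin.eq_of_le ⟨x + y, hF.add_mem hC hxF hy, rfl⟩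
    (hsum ▸ Finset.inter_subset_left)
  rw [← heq, hsum]
  exact Finset.inter_subset_right

theorem ncard_zeroPatterns [DecidableEq ι] (hpt : ∀ x ∈ coneOf φ, -x ∈ coneOf φ → x = 0) :
    (zeroPatterns φ).ncard = {F | IsFace (coneOf φ) F}.ncard - 1 := by
  have hinj : InjOn (exposedFace φ) (zeroPatterns φ) := by
    rintro _ ⟨x, ⟨hx, -⟩, rfl⟩ _ ⟨y, ⟨hy, -⟩, rfl⟩ h
    have hxy : x ∈ exposedFace φ (zeroSet φ y) := h ▸ ⟨hx, subset_rfl⟩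
    have hyx : y ∈ exposedFace φ (zeroSet φ x) := h ▸ ⟨hy, subset_rfl⟩
    exact hyx.2.antisymm hxy.2
  have hzero : exposedFace φ (zeroSet φ 0) = {0} := by
    convert exposedFace_univ hpt
    ext
    simp
  have himage : exposedFace φ '' zeroPatterns φ = {F | IsFace (coneOf φ) F} \ {{0}} := by
    ext F
    constructor
    · rintro ⟨_, ⟨x, ⟨hx, hx0⟩, rfl⟩, rfl⟩
      exact ⟨isFace_exposedFace _, fun h => hx0 (h.subset ⟨hx, subset_rfl⟩)⟩
    · rintro ⟨hF, hF0⟩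
      obtain ⟨x, hxF, rfl⟩ := hF.exists_eq_exposedFace
      refine ⟨zeroSet φ x, ⟨x, ⟨hF.2.2.1 hxF, fun hx0 => hF0 ?_⟩, rfl⟩, rfl⟩
      rw [Set.mem_singleton_iff] at hx0 ⊢
      rw [hx0, hzero]
  rw [← hinj.ncard_image, himage,
    Set.ncard_sdiff_singleton_of_mem (exposedFace_univ hpt ▸ isFace_exposedFace Finset.univ)]

end Faces

section Spectrum

variable {E ι : Type*} [NormedAddCommGroup E] [NormedSpace ℝ E] {φ : ι → E →ₗ[ℝ] ℝ} {f : E → E}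

theorem pow_smul_sub_mem_coneOf (hhom : IsHomog (coneOf φ) f) (hord : IsOrdPres (coneOf φ) f)
    {x y : E} (hx : x ∈ coneOf φ) (hy : y ∈ coneOf φ) {ρ σ : ℝ} (hρ : 0 ≤ ρ) (hσ : 0 ≤ σ)
    (hfx : f x = ρ • x) (hfy : f y = σ • y) {c : ℝ} (hc : 0 ≤ c) (h : x - c • y ∈ coneOf φ)
    (N : ℕ) : ρ ^ N • x - (c * σ ^ N) • y ∈ coneOf φ := by
  induction N with
  | zero => simpa using h
  | succ N ih =>
    have hmono :=
      hord _ (smul_mem_coneOf (by positivity) hy) _ (smul_mem_coneOf (by positivity) hx) ih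
    unfold coneLE at hmono
    rw [hhom _ (by positivity) _ hy, hhom _ (by positivity) _ hx, hfy, hfx, smul_smul,
      smul_smul] at hmono
    convert hmono using 1
    rw [pow_succ, pow_succ, mul_assoc]

theorem faceEigenvalue_le_of_sub_smul_mem (hpt : ∀ x ∈ coneOf φ, -x ∈ coneOf φ → x = 0)
    (hhom : IsHomog (coneOf φ) f) (hord : IsOrdPres (coneOf φ) f) {x y : E} (hx : x ∈ coneOf φ)
    (hy : y ∈ coneOf φ) (hx0 : x ≠ 0) {ρ σ : ℝ} (hρ : 0 ≤ ρ) (hσ : 0 ≤ σ)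
    (hfx : f x = ρ • x) (hfy : f y = σ • y) {ε δ : ℝ} (hε : 0 < ε) (hδ : 0 < δ)
    (hxy : x - ε • y ∈ coneOf φ) (hyx : y - δ • x ∈ coneOf φ) : σ ≤ ρ := by
  by_contra! hρσ
  have hσpos : 0 < σ := hρ.trans_lt hρσ
  obtain ⟨N, hN⟩ := exists_pow_lt_of_lt_one (mul_pos hε hδ) ((div_lt_one hσpos).2 hρσ)
  -- `ρ ^ N • x ≥ ε σ ^ N • y ≥ ε δ σ ^ N • x`
  have hmem : (ρ ^ N - ε * δ * σ ^ N) • x ∈ coneOf φ := by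
    convert add_mem_coneOf (pow_smul_sub_mem_coneOf hhom hord hx hy hρ hσ hfx hfy hε.le hxy N)
      (smul_mem_coneOf (by positivity : 0 ≤ ε * σ ^ N) hyx) using 1
    module
  have hle := nonneg_of_smul_mem_coneOf hpt hx hx0 hmem
  rw [div_pow, div_lt_iff₀ (by positivity)] at hN
  linarith

variable [Fintype ι]

theorem faceEigenvalue_eq_of_zeroSet_eq (hpt : ∀ x ∈ coneOf φ, -x ∈ coneOf φ → x = 0)
    (hhom : IsHomog (coneOf φ) f) (hord : IsOrdPres (coneOf φ) f) {x y : E} (hx : x ∈ coneOf φ)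
    (hy : y ∈ coneOf φ) (hx0 : x ≠ 0) (hy0 : y ≠ 0) {ρ σ : ℝ} (hρ : 0 ≤ ρ) (hσ : 0 ≤ σ)
    (hfx : f x = ρ • x) (hfy : f y = σ • y) (hxy : zeroSet φ x = zeroSet φ y) : ρ = σ := by
  obtain ⟨ε, hε, hεxy⟩ := exists_sub_smul_mem_coneOf hx hxy.le
  obtain ⟨δ, hδ, hδyx⟩ := exists_sub_smul_mem_coneOf hy hxy.ge
  exact le_antisymm
    (faceEigenvalue_le_of_sub_smul_mem hpt hhom hord hy hx hy0 hσ hρ hfy hfx hδ hε hδyx hεxy)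
    (faceEigenvalue_le_of_sub_smul_mem hpt hhom hord hx hy hx0 hρ hσ hfx hfy hε hδ hεxy hδyx)

theorem coneSpectrum_finite_and_ncard_le (hpt : ∀ x ∈ coneOf φ, -x ∈ coneOf φ → x = 0)
    (hhom : IsHomog (coneOf φ) f) (hord : IsOrdPres (coneOf φ) f) :
    (coneSpectrum (coneOf φ) f).Finite ∧
      (coneSpectrum (coneOf φ) f).ncard ≤ (zeroPatterns φ).ncard := by
  have hvec : ∀ ρ ∈ coneSpectrum (coneOf φ) f, ∃ x, (x ∈ coneOf φ ∧ x ≠ 0) ∧ f x = ρ • x :=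
    fun ρ ⟨_, x, hx, hx0, hfx⟩ => ⟨x, ⟨hx, hx0⟩, hfx⟩
  choose! v hv hfv using hvec
  have hmaps : MapsTo (zeroSet φ ∘ v) (coneSpectrum (coneOf φ) f) (zeroPatterns φ) :=
    fun ρ hρ => ⟨v ρ, hv ρ hρ, rfl⟩
  have hinj : InjOn (zeroSet φ ∘ v) (coneSpectrum (coneOf φ) f) := fun ρ hρ σ hσ h =>
    faceEigenvalue_eq_of_zeroSet_eq hpt hhom hord (hv ρ hρ).1 (hv σ hσ).1 (hv ρ hρ).2 (hv σ hσ).2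
      hρ.1 hσ.1 (hfv ρ hρ) (hfv σ hσ) h
  exact ⟨Set.Finite.of_injOn hmaps hinj (Set.toFinite _), Set.ncard_le_ncard_of_injOn _ hmaps hinj⟩

end Spectrum

section Construction

variable {E ι : Type*} [AddCommGroup E] [Module ℝ E] [Fintype ι] (φ : ι → E →ₗ[ℝ] ℝ)

def zeroSetWitness (I : Finset ι) : E := Function.invFunOn (zeroSet φ) (coneOf φ \ {0}) I

def zeroSetTag (I : Finset ι) : ℝ := ((Fintype.equivFin (Finset ι) I : ℕ) + 2 : ℝ)⁻¹

/-- Large enough that `eigenvalueFor φ I W • zeroSetWitness φ I - W` lies in the cone when `W`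
vanishes on `I` (where the summands are `0 / 0 = 0`); its fractional part `zeroSetTag I`
identifies `I`. -/
def eigenvalueFor (I : Finset ι) (W : E) : ℝ :=
  ⌈∑ i, φ i W / φ i (zeroSetWitness φ I)⌉₊ + zeroSetTag I

variable {φ}

theorem zeroSetWitness_spec {I : Finset ι} (hI : I ∈ zeroPatterns φ) :
    (zeroSetWitness φ I ∈ coneOf φ ∧ zeroSetWitness φ I ≠ 0) ∧ zeroSet φ (zeroSetWitness φ I) = I :=
  Function.invFunOn_pos hI

theorem zeroSetWitness_pos {I : Finset ι} (hI : I ∈ zeroPatterns φ) {i : ι} (hi : i ∉ I) :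
    0 < φ i (zeroSetWitness φ I) := by
  obtain ⟨⟨hy, -⟩, hyI⟩ := zeroSetWitness_spec hI
  refine (hy i).lt_of_ne fun h => hi ?_
  rw [← hyI, mem_zeroSet, h]

theorem zeroSetTag_pos (I : Finset ι) : 0 < zeroSetTag I := by
  unfold zeroSetTag
  positivity

theorem fract_eigenvalueFor (I : Finset ι) (W : E) :
    Int.fract (eigenvalueFor φ I W) = zeroSetTag I := by
  rw [eigenvalueFor, Int.fract_natCast_add, Int.fract_eq_self]
  refine ⟨(zeroSetTag_pos I).le, inv_lt_one_of_one_lt₀ ?_⟩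
  linarith [(Nat.cast_nonneg _ : (0 : ℝ) ≤ (Fintype.equivFin (Finset ι) I : ℕ))]

theorem eq_of_eigenvalueFor_eq {I J : Finset ι} {W W' : E}
    (h : eigenvalueFor φ I W = eigenvalueFor φ J W') : I = J := by
  have htag : zeroSetTag I = zeroSetTag J := by
    rw [← fract_eigenvalueFor I W, h, fract_eigenvalueFor]
  have hidx : (Fintype.equivFin (Finset ι) I : ℕ) = Fintype.equivFin (Finset ι) J := by
    simpa [zeroSetTag] using htag
  exact (Fintype.equivFin _).injective (Fin.ext hidx)

theorem eigenvalueFor_pos (I : Finset ι) (W : E) : 0 < eigenvalueFor φ I W := by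
  have := zeroSetTag_pos I
  unfold eigenvalueFor
  positivity

theorem le_eigenvalueFor_mul {I : Finset ι} (hI : I ∈ zeroPatterns φ) {W : E}
    (hW : W ∈ coneOf φ) {i : ι} (hi : i ∉ I) :
    φ i W ≤ eigenvalueFor φ I W * φ i (zeroSetWitness φ I) := by
  have hterm : φ i W / φ i (zeroSetWitness φ I) ≤ ∑ j, φ j W / φ j (zeroSetWitness φ I) :=
    Finset.single_le_sum (fun j _ => div_nonneg (hW j) ((zeroSetWitness_spec hI).1.1 j))
      (Finset.mem_univ i)
  rw [← div_le_iff₀ (zeroSetWitness_pos hI hi), eigenvalueFor]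
  linarith [Nat.le_ceil (∑ j, φ j W / φ j (zeroSetWitness φ I)), zeroSetTag_pos I]

variable [DecidableEq ι]

theorem smul_zeroSetWitness_sub_mem_exposedFace {I : Finset ι} (hI : I ∈ zeroPatterns φ) {W : E}
    (hW : W ∈ exposedFace φ I) :
    eigenvalueFor φ I W • zeroSetWitness φ I - W ∈ exposedFace φ I := by
  have hzero : ∀ i ∈ I, φ i W = 0 ∧ φ i (zeroSetWitness φ I) = 0 := fun i hi =>
    ⟨mem_zeroSet.1 (hW.2 hi), mem_zeroSet.1 ((zeroSetWitness_spec hI).2.symm.subset hi)⟩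
  refine ⟨fun i => ?_, fun i hi => by simp [(hzero i hi).1, (hzero i hi).2]⟩
  simp only [map_sub, map_smul, smul_eq_mul, sub_nonneg]
  by_cases hi : i ∈ I
  · simp [(hzero i hi).1, (hzero i hi).2]
  · exact le_eigenvalueFor_mul hI hW.1 hi

variable (φ) in
open Classical in
/-- Solves `faceGaugeMap φ (zeroSetWitness φ I) = faceEigenvalue φ I • zeroSetWitness φ I` for
`faceVec φ I`, given the `faceVec φ J` with `I ⊂ J`. -/
def faceVec (I : Finset ι) : E :=
  if I ∈ zeroPatterns φ then
    let W := ∑ J, if _ : I ⊂ J then minCoord φ Jᶜ (zeroSetWitness φ I) • faceVec J else 0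
    (minCoord φ Iᶜ (zeroSetWitness φ I))⁻¹ • (eigenvalueFor φ I W • zeroSetWitness φ I - W)
  else 0
termination_by Iᶜ.card
decreasing_by exact Finset.card_lt_card (Finset.compl_ssubset_compl.2 ‹_›)

variable (φ) in
def subfaceSum (I : Finset ι) : E :=
  ∑ J, if I ⊂ J then minCoord φ Jᶜ (zeroSetWitness φ I) • faceVec φ J else 0

variable (φ) in
def faceEigenvalue (I : Finset ι) : ℝ := eigenvalueFor φ I (subfaceSum φ I)

variable (φ) in
def faceGaugeMap (z : E) : E := ∑ J, minCoord φ Jᶜ z • faceVec φ J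

theorem faceVec_of_mem {I : Finset ι} (hI : I ∈ zeroPatterns φ) :
    faceVec φ I = (minCoord φ Iᶜ (zeroSetWitness φ I))⁻¹ •
      (faceEigenvalue φ I • zeroSetWitness φ I - subfaceSum φ I) := by
  rw [faceVec, if_pos hI]
  simp only [dite_eq_ite]
  rfl

theorem faceVec_mem_exposedFace (I : Finset ι) : faceVec φ I ∈ exposedFace φ I := by
  by_cases hI : I ∈ zeroPatterns φ
  swap
  · rw [faceVec, if_neg hI]
    exact zero_mem_exposedFace
  have hsub : subfaceSum φ I ∈ exposedFace φ I := by
    refine Finset.sum_induction _ (· ∈ exposedFace φ I) (fun _ _ => add_mem_exposedFace)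
      zero_mem_exposedFace fun J _ => ?_
    split_ifs with hIJ
    · exact smul_mem_exposedFace (minCoord_nonneg (zeroSetWitness_spec hI).1.1)
        (exposedFace_anti hIJ.subset (faceVec_mem_exposedFace J))
    · exact zero_mem_exposedFace
  rw [faceVec_of_mem hI]
  exact smul_mem_exposedFace (inv_nonneg.2 (minCoord_nonneg (zeroSetWitness_spec hI).1.1))
    (smul_zeroSetWitness_sub_mem_exposedFace hI hsub)
termination_by Iᶜ.card
decreasing_by exact Finset.card_lt_card (Finset.compl_ssubset_compl.2 hIJ)

theorem minCoord_zeroSetWitness_smul_faceVec {I : Finset ι} (hI : I ∈ zeroPatterns φ)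
    (J : Finset ι) :
    minCoord φ Jᶜ (zeroSetWitness φ I) • faceVec φ J =
      (if J = I then minCoord φ Iᶜ (zeroSetWitness φ I) • faceVec φ I else 0) +
        if I ⊂ J then minCoord φ Jᶜ (zeroSetWitness φ I) • faceVec φ J else 0 := by
  by_cases hJI : J = I
  · subst hJI
    simp
  by_cases hIJ : I ⊂ J
  · simp [hJI, hIJ]
  -- otherwise some `i ∈ I \ J` is a zero of the zeroSetWitness outside `J`
  obtain ⟨i, hiI, hiJ⟩ := Finset.not_subset.1 fun h => hIJ (h.ssubset_of_ne (Ne.symm hJI))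
  have hzero : minCoord φ Jᶜ (zeroSetWitness φ I) = 0 :=
    minCoord_eq_zero (zeroSetWitness_spec hI).1.1 (Finset.mem_compl.2 hiJ)
      (mem_zeroSet.1 ((zeroSetWitness_spec hI).2.symm.subset hiI))
  simp [hJI, hIJ, hzero]

theorem faceGaugeMap_zeroSetWitness (hpt : ∀ x ∈ coneOf φ, -x ∈ coneOf φ → x = 0) {I : Finset ι}
    (hI : I ∈ zeroPatterns φ) :
    faceGaugeMap φ (zeroSetWitness φ I) = faceEigenvalue φ I • zeroSetWitness φ I := by
  have hpos : 0 < minCoord φ Iᶜ (zeroSetWitness φ I) :=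
    minCoord_pos (compl_nonempty_of_mem_zeroPatterns hpt hI) fun i hi =>
      zeroSetWitness_pos hI (Finset.mem_compl.1 hi)
  rw [faceGaugeMap, Finset.sum_congr rfl fun J _ => minCoord_zeroSetWitness_smul_faceVec hI J,
    Finset.sum_add_distrib, Finset.sum_ite_eq', if_pos (Finset.mem_univ I), ← subfaceSum,
    faceVec_of_mem hI, smul_smul, mul_inv_cancel₀ hpos.ne', one_smul, sub_add_cancel]

theorem faceGaugeMap_mem_coneOf {z : E} (hz : z ∈ coneOf φ) : faceGaugeMap φ z ∈ coneOf φ :=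
  (sum_smul_mem_exposedFace (I := ∅) _ (fun _ _ => minCoord_nonneg hz)
    fun J _ => exposedFace_anti (Finset.empty_subset J) (faceVec_mem_exposedFace J)).1

end Construction

section FaceGaugeMap

variable {E ι : Type*} [NormedAddCommGroup E] [NormedSpace ℝ E] [Fintype ι] [DecidableEq ι]
  {φ : ι → E →ₗ[ℝ] ℝ}

theorem continuous_faceGaugeMap [FiniteDimensional ℝ E] : Continuous (faceGaugeMap φ) := by
  refine continuous_finsetSum _ fun J _ => (Continuous.smul ?_ continuous_const)
  unfold minCoord
  split_ifs with hJ
  · exact Continuous.finset_inf'_apply hJ fun i _ => (φ i).continuous_of_finiteDimensional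
  · exact continuous_const

theorem isHomog_faceGaugeMap : IsHomog (coneOf φ) (faceGaugeMap φ) := by
  intro a ha z _
  simp only [faceGaugeMap, Finset.smul_sum, minCoord_smul ha, mul_smul]

theorem isOrdPres_faceGaugeMap : IsOrdPres (coneOf φ) (faceGaugeMap φ) := by
  intro x _ y _ hxy
  unfold coneLE faceGaugeMap
  rw [← Finset.sum_sub_distrib]
  simp only [← sub_smul]
  refine (sum_smul_mem_exposedFace (I := ∅) _ (fun J _ => sub_nonneg.2 (minCoord_mono fun i => ?_))
    fun J _ => exposedFace_anti (Finset.empty_subset J) (faceVec_mem_exposedFace J)).1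
  simpa using hxy i

theorem ncard_coneSpectrum_faceGaugeMap (hpt : ∀ x ∈ coneOf φ, -x ∈ coneOf φ → x = 0) :
    (coneSpectrum (coneOf φ) (faceGaugeMap φ)).ncard = (zeroPatterns φ).ncard := by
  obtain ⟨hfin, hle⟩ :=
    coneSpectrum_finite_and_ncard_le hpt isHomog_faceGaugeMap isOrdPres_faceGaugeMap
  refine hle.antisymm (Set.ncard_le_ncard_of_injOn (faceEigenvalue φ) (fun I hI => ?_)
    (fun I _ J _ h => eq_of_eigenvalueFor_eq h) hfin)
  obtain ⟨⟨hy, hy0⟩, -⟩ := zeroSetWitness_spec hI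
  exact ⟨(eigenvalueFor_pos I _).le, _, hy, hy0, faceGaugeMap_zeroSetWitness hpt hI⟩

end FaceGaugeMap

theorem polyhedral_coneSpectrum_card_general
    (C : Set V) (hC : IsClosedCone C) (hpoly : IsPolyhedral C)
    (m : ℕ)
    (hm : {F : Set V | IsFace C F}.ncard = m) :
    (∀ f : V → V, Set.MapsTo f C C → IsHomog C f → IsOrdPres C f →
        (coneSpectrum C f).Finite ∧ (coneSpectrum C f).ncard ≤ m - 1) ∧
      ∃ g : V → V, Set.MapsTo g C C ∧ ContinuousOn g C ∧ IsHomog C g ∧ IsOrdPres C g ∧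
        (coneSpectrum C g).ncard = m - 1 := by
  obtain ⟨n, φ, rfl⟩ := hpoly
  have hpt : ∀ x ∈ coneOf φ, -x ∈ coneOf φ → x = 0 := hC.2.2.2
  have hcount : (zeroPatterns φ).ncard = m - 1 := hm ▸ ncard_zeroPatterns hpt
  refine ⟨fun f _ hhom hord => hcount ▸ coneSpectrum_finite_and_ncard_le hpt hhom hord,
    faceGaugeMap φ, fun _ => faceGaugeMap_mem_coneOf, continuous_faceGaugeMap.continuousOn,
    isHomog_faceGaugeMap, isOrdPres_faceGaugeMap, hcount ▸ ncard_coneSpectrum_faceGaugeMap hpt⟩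

/-- Let `C` be a polyhedral cone with non-empty interior in a finite dimensional real
vector space, with exactly `m` faces. Then (i) the cone spectrum of every order-preserving
homogeneous map `f : C → C` contains at most `m - 1` elements; and (ii) there exists a
continuous order-preserving homogeneous map `g : C → C` whose cone spectrum contains
exactly `m - 1` distinct elements. -/
theorem polyhedral_coneSpectrum_card
    (C : Set V) (hC : IsClosedCone C) (hpoly : IsPolyhedral C)
    (hint : (interior C).Nonempty)
    (m : ℕ) (hfin : {F : Set V | IsFace C F}.Finite)
    (hm : {F : Set V | IsFace C F}.ncard = m) :
    (∀ f : V → V, Set.MapsTo f C C → IsHomog C f → IsOrdPres C f →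
        (coneSpectrum C f).Finite ∧ (coneSpectrum C f).ncard ≤ m - 1) ∧
      ∃ g : V → V, Set.MapsTo g C C ∧ ContinuousOn g C ∧ IsHomog C g ∧ IsOrdPres C g ∧
        (coneSpectrum C g).ncard = m - 1 :=
  polyhedral_coneSpectrum_card_general C hC hpoly m hm
end
end

section
/- Let C be a closed non-polyhedral cone with non-empty interior in a finite dimensional real vector space V. Then there exists a continuous order-preserving homogeneous map f : C → C with infinitely many distinct eigenvalues, i.e., the cone spectrum σ_C(f) is infinite. -/
open Filter Topology Set

noncomputable section

variable {V : Type*} [NormedAddCommGroup V] [NormedSpace ℝ V] [FiniteDimensional ℝ V]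

/-!
Transport `C` to an inner product space, pick `u` in its interior and let `B` be the compact
base `{y ∈ C^* | ⟪u, y⟫ = 1}` of the dual cone. A point of `B` farthest from a given point is
exposed; separating a point of `B` from the hull of the exposed points and going far away in the
separating direction shows (Straszewicz) that finitely many exposed points would span `B`, so by
biduality `C` would be the dual of a finite set, i.e. polyhedral. Hence `B` has infinitely many
exposed points `v n`, converging to some `v∞ ∈ B` different from all of them, and `v n` is exposed
by some `p n ∈ C` with `⟪p n, v n⟫ = 0 < ⟪p n, y⟫` for all other `y ∈ B`.
The functional `φ j = ⨅ i, ⟪·, q j i⟫`, where `q j` is `v` with its `j`-th term replaced by `v∞`,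
is monotone, homogeneous and Lipschitz, vanishes at `p i` for `i ≠ j`, and is positive at `p j`
because `⟪p j, v i⟫ → ⟪p j, v∞⟫ > 0`. So `f = ∑ j, 2⁻ʲ φ j (·) p j / ‖p j‖` has each `p j` as an
eigenvector, with positive eigenvalues tending to `0`.
-/

lemma Set.infinite_range_of_tendsto_of_forall_ne {X : Type*} [TopologicalSpace X] [T1Space X]
    {ρ : ℕ → X} {a : X} (hne : ∀ n, ρ n ≠ a) (hlim : Tendsto ρ atTop (𝓝 a)) :
    (range ρ).Infinite := fun hfin => by
  obtain ⟨n, hn⟩ : a ∈ range ρ := hfin.isClosed.closure_eq ▸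
    mem_closure_of_tendsto hlim (Eventually.of_forall mem_range_self)
  exact hne n hn

lemma Set.Infinite.exists_injective_tendsto_of_isCompact {X : Type*} [TopologicalSpace X]
    [FirstCountableTopology X] {S K : Set X} (hS : S.Infinite) (hK : IsCompact K) (hSK : S ⊆ K) :
    ∃ a ∈ K, ∃ v : ℕ → X, Function.Injective v ∧ (∀ n, v n ∈ S) ∧ (∀ n, v n ≠ a) ∧
      Tendsto v atTop (𝓝 a) := by
  let e := hS.natEmbedding S
  let w : ℕ → X := fun n => e n
  obtain ⟨a, ha, φ, hφ, hlim⟩ := hK.tendsto_subseq fun n => hSK (e n).2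
  have hinj : Function.Injective (w ∘ φ) :=
    (Subtype.val_injective.comp e.injective).comp hφ.injective
  have hev : ∀ᶠ n in atTop, w (φ n) ≠ a :=
    Nat.cofinite_eq_atTop ▸ hinj.tendsto_cofinite.eventually (eventually_cofinite_ne a)
  obtain ⟨N, hN⟩ := eventually_atTop.mp hev
  exact ⟨a, ha, fun n => w (φ (n + N)), hinj.comp (add_left_injective N),
    fun n => (e _).2, fun n => hN _ (Nat.le_add_left N n),
    hlim.comp (tendsto_add_atTop_nat N)⟩

namespace IsClosedCone

variable {E : Type*} [NormedAddCommGroup E] [NormedSpace ℝ E] {C : Set E}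

lemma smul_mem (hC : IsClosedCone C) {a : ℝ} (ha : 0 ≤ a) {x : E} (hx : x ∈ C) : a • x ∈ C :=
  hC.2.2.1 a ha x hx

lemma zero_mem (hC : IsClosedCone C) (hne : C.Nonempty) : (0 : E) ∈ C := by
  obtain ⟨x, hx⟩ := hne
  simpa using hC.smul_mem le_rfl hx

lemma add_mem (hC : IsClosedCone C) {x y : E} (hx : x ∈ C) (hy : y ∈ C) : x + y ∈ C := by
  have hmid := hC.2.1 hx hy (by norm_num : (0 : ℝ) ≤ 1 / 2) (by norm_num : (0 : ℝ) ≤ 1 / 2)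
    (by norm_num)
  convert hC.smul_mem zero_le_two hmid using 1
  module

def toProperCone (hC : IsClosedCone C) (hne : C.Nonempty) : ProperCone ℝ E where
  carrier := C
  add_mem' := hC.add_mem
  zero_mem' := hC.zero_mem hne
  smul_mem' c _ hx := hC.smul_mem c.2 hx
  isClosed' := hC.1

@[simp]
lemma coe_toProperCone (hC : IsClosedCone C) (hne : C.Nonempty) :
    (hC.toProperCone hne : Set E) = C :=
  rfl

lemma tsum_mem (hC : IsClosedCone C) (hne : C.Nonempty) {g : ℕ → E} (hg : Summable g)
    (hgC : ∀ i, g i ∈ C) : ∑' i, g i ∈ C :=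
  hC.1.mem_of_tendsto hg.hasSum
    (Eventually.of_forall fun _ => (hC.toProperCone hne).sum_mem fun i _ => hgC i)

end IsClosedCone

section InnerProductSpace

open scoped RealInnerProductSpace
open ProperCone (innerDual mem_innerDual innerDual_le_innerDual)

variable {E : Type*} [NormedAddCommGroup E] [InnerProductSpace ℝ E]

lemma IsCompact.exists_mem_exposedPoints_forall_norm_sub_le {B : Set E} (hB : IsCompact B)
    (hne : B.Nonempty) (z : E) : ∃ b ∈ B.exposedPoints ℝ, ∀ y ∈ B, ‖y - z‖ ≤ ‖b - z‖ := by
  obtain ⟨b, hbB, hbmax⟩ :=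
    hB.exists_isMaxOn hne (continuous_id.sub continuous_const).norm.continuousOn
  have key : ∀ y ∈ B, 2 * (⟪b - z, y⟫ - ⟪b - z, b⟫) ≤ -‖y - b‖ ^ 2 := by
    intro y hy
    have hsq := norm_add_sq_real (y - b) (b - z)
    rw [sub_add_sub_cancel, real_inner_comm, inner_sub_right] at hsq
    have hyz : ‖y - z‖ ≤ ‖b - z‖ := hbmax hy
    nlinarith [norm_nonneg (y - z)]
  refine ⟨b, ⟨hbB, innerSL ℝ (b - z), fun y hy => ?_⟩, fun y hy => hbmax hy⟩
  simp only [innerSL_apply_apply]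
  refine ⟨by nlinarith [key y hy, sq_nonneg ‖y - b‖], fun hle => ?_⟩
  have hyb : ‖y - b‖ ^ 2 ≤ 0 := by linarith [key y hy]
  simpa [sub_eq_zero] using pow_eq_zero_iff two_ne_zero |>.mp (le_antisymm hyb (sq_nonneg _))

theorem IsCompact.subset_convexHull_exposedPoints [CompleteSpace E] {B : Set E}
    (hB : IsCompact B) (hfin : (B.exposedPoints ℝ).Finite) :
    B ⊆ convexHull ℝ (B.exposedPoints ℝ) := by
  intro x hxB
  by_contra hx
  obtain ⟨l, c, hl, hc⟩ := geometric_hahn_banach_closed_point (convex_convexHull ℝ _)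
    (hfin.isCompact_convexHull ℝ).isClosed hx
  set w := (InnerProductSpace.toDual ℝ E).symm l
  have hw : ∀ y, ⟪w, y⟫ = l y := fun y => InnerProductSpace.toDual_symm_apply
  set d := Metric.diam B
  set t := (d ^ 2 + 1) / (2 * (l x - c))
  have ht : 0 < t := div_pos (by positivity) (by linarith)
  have htc : 2 * t * (l x - c) = d ^ 2 + 1 := by
    simp only [t]
    field_simp [(by linarith : l x - c ≠ 0)]
  -- the point farthest from `x - t • w` is exposed, hence lies in the hull, yet beyond `c`
  obtain ⟨b, hb, hbmax⟩ := hB.exists_mem_exposedPoints_forall_norm_sub_le ⟨x, hxB⟩ (x - t • w)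
  have hbc : l b < c := hl b (subset_convexHull ℝ _ hb)
  have hbx : ‖b - x‖ ≤ d := by
    rw [← dist_eq_norm]
    exact Metric.dist_le_diam_of_mem hB.isBounded (exposedPoints_subset hb) hxB
  have hfar : 2 * t * (l x - l b) ≤ ‖b - x‖ ^ 2 := by
    have h := hbmax x hxB
    rw [sub_sub_cancel, show b - (x - t • w) = (b - x) + t • w by abel] at h
    have hsq := norm_add_sq_real (b - x) (t • w)
    rw [real_inner_smul_right, real_inner_comm, inner_sub_right, hw, hw] at hsq
    nlinarith [pow_le_pow_left₀ (norm_nonneg _) h 2]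
  nlinarith [mul_lt_mul_of_pos_left (show l x - c < l x - l b by linarith)
    (by positivity : 0 < 2 * t), pow_le_pow_left₀ (norm_nonneg _) hbx 2]

lemma innerDual_convexHull [CompleteSpace E] (S : Set E) :
    innerDual (convexHull ℝ S) = innerDual S := by
  refine le_antisymm (innerDual_le_innerDual (subset_convexHull ℝ S)) fun y hy => ?_
  exact mem_innerDual.mpr fun x hx => convexHull_min (fun x hx => mem_innerDual.mp hy hx)
    (convex_halfSpace_ge ((innerₗ E).flip y).isLinear 0) hx

lemma isPolyhedral_innerDual_of_finite [CompleteSpace E] {S : Set E} (hS : S.Finite) :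
    IsPolyhedral (innerDual S : Set E) := by
  obtain ⟨m, g, hg⟩ := hS.fin_embedding
  refine ⟨m, fun i => innerₗ E (g i), ?_⟩
  ext x
  simp [← hg, real_inner_comm]

def innerDualBase [CompleteSpace E] (D : Set E) (u : E) : Set E :=
  (innerDual D : Set E) ∩ {y | ⟪u, y⟫ = 1}

section InnerDualBase

variable [CompleteSpace E] {D : Set E} {u y : E} {r : ℝ}

lemma mul_norm_le_inner_of_mem_innerDual (hr : 0 ≤ r) (hball : Metric.closedBall u r ⊆ D)
    (hy : y ∈ innerDual D) : r * ‖y‖ ≤ ⟪u, y⟫ := by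
  rcases eq_or_ne y 0 with rfl | hy0
  · simp
  have hny : 0 < ‖y‖ := norm_pos_iff.mpr hy0
  have hz : u - (r / ‖y‖) • y ∈ D := hball <| by
    simp [norm_smul, abs_of_nonneg hr, hny.ne']
  have h := mem_innerDual.mp hy hz
  rw [inner_sub_left, real_inner_smul_left, real_inner_self_eq_norm_sq] at h
  have : r / ‖y‖ * ‖y‖ ^ 2 = r * ‖y‖ := by field_simp
  linarith

lemma norm_le_of_mem_innerDualBase (hr : 0 < r) (hball : Metric.closedBall u r ⊆ D)
    (hy : y ∈ innerDualBase D u) : ‖y‖ ≤ r⁻¹ := by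
  have h := mul_norm_le_inner_of_mem_innerDual hr.le hball hy.1
  rw [hy.2] at h
  rw [← one_div, le_div_iff₀ hr]
  linarith

lemma inner_pos_of_mem_innerDual (hr : 0 < r) (hball : Metric.closedBall u r ⊆ D)
    (hy : y ∈ innerDual D) (hy0 : y ≠ 0) : 0 < ⟪u, y⟫ :=
  (mul_pos hr (norm_pos_iff.mpr hy0)).trans_le (mul_norm_le_inner_of_mem_innerDual hr.le hball hy)

lemma inv_inner_smul_mem_innerDualBase (hr : 0 < r) (hball : Metric.closedBall u r ⊆ D)
    (hy : y ∈ innerDual D) (hy0 : y ≠ 0) : ⟪u, y⟫⁻¹ • y ∈ innerDualBase D u := by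
  have hpos := inner_pos_of_mem_innerDual hr hball hy hy0
  refine ⟨mem_innerDual.mpr fun x hx => ?_, ?_⟩
  · rw [real_inner_smul_right]
    exact mul_nonneg (inv_nonneg.mpr hpos.le) (mem_innerDual.mp hy hx)
  · simp [real_inner_smul_right, hpos.ne']

lemma innerDual_innerDualBase (hD : IsClosedCone D) (hr : 0 < r)
    (hball : Metric.closedBall u r ⊆ D) : (innerDual (innerDualBase D u) : Set E) = D := by
  ext x
  refine ⟨fun hx => ?_, fun hx => mem_innerDual.mpr fun y hy =>
    real_inner_comm x y ▸ mem_innerDual.mp hy.1 hx⟩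
  have hne : D.Nonempty := ⟨u, hball (Metric.mem_closedBall_self hr.le)⟩
  rw [← hD.coe_toProperCone hne, ← ProperCone.innerDual_innerDual (hD.toProperCone hne)]
  refine mem_innerDual.mpr fun y hy => ?_
  rcases eq_or_ne y 0 with rfl | hy0
  · simp
  have h := mem_innerDual.mp hx (inv_inner_smul_mem_innerDualBase hr hball hy hy0)
  rw [real_inner_smul_left] at h
  exact nonneg_of_mul_nonneg_right h (inv_pos.mpr (inner_pos_of_mem_innerDual hr hball hy hy0))

lemma exists_mem_inner_eq_zero_of_mem_exposedPoints (hD : IsClosedCone D) (hr : 0 < r)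
    (hball : Metric.closedBall u r ⊆ D) {v : E} (hv : v ∈ (innerDualBase D u).exposedPoints ℝ) :
    ∃ p ∈ D, ⟪p, v⟫ = 0 ∧ ∀ y ∈ innerDualBase D u, y ≠ v → 0 < ⟪p, y⟫ := by
  obtain ⟨hvB, l, hl⟩ := hv
  set p := l v • u - (InnerProductSpace.toDual ℝ E).symm l
  have hp : ∀ y ∈ innerDualBase D u, ⟪p, y⟫ = l v - l y := fun y hy => by
    have hy1 : ⟪u, y⟫ = 1 := hy.2
    simp only [p, inner_sub_left, real_inner_smul_left, hy1, mul_one,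
      InnerProductSpace.toDual_symm_apply]
  refine ⟨p, ?_, by rw [hp v hvB, sub_self], fun y hy hyv => ?_⟩
  · rw [← innerDual_innerDualBase hD hr hball]
    refine mem_innerDual.mpr fun y hy => ?_
    rw [real_inner_comm, hp y hy]
    linarith [(hl y hy).1]
  · rw [hp y hy]
    exact sub_pos.mpr <| (hl y hy).1.lt_of_ne fun h => hyv ((hl y hy).2 h.ge)

end InnerDualBase

section InfInner

variable {q : ℕ → E} {R : ℝ} {x y : E}

def infInner (q : ℕ → E) (x : E) : ℝ :=
  ⨅ i, ⟪x, q i⟫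

lemma abs_inner_le_of_forall_norm_le (hq : ∀ i, ‖q i‖ ≤ R) (x : E) (i : ℕ) :
    |⟪x, q i⟫| ≤ R * ‖x‖ :=
  (abs_real_inner_le_norm x (q i)).trans <| by
    rw [mul_comm]
    exact mul_le_mul_of_nonneg_right (hq i) (norm_nonneg x)

lemma bddBelow_range_inner (hq : ∀ i, ‖q i‖ ≤ R) (x : E) : BddBelow (range fun i => ⟪x, q i⟫) :=
  ⟨-(R * ‖x‖), forall_mem_range.mpr fun i => neg_le_of_abs_le
    (abs_inner_le_of_forall_norm_le hq x i)⟩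

lemma infInner_le (hq : ∀ i, ‖q i‖ ≤ R) (x : E) (i : ℕ) : infInner q x ≤ ⟪x, q i⟫ :=
  ciInf_le (bddBelow_range_inner hq x) i

lemma le_infInner {c : ℝ} (h : ∀ i, c ≤ ⟪x, q i⟫) : c ≤ infInner q x :=
  le_ciInf h

lemma abs_infInner_le (hq : ∀ i, ‖q i‖ ≤ R) (x : E) : |infInner q x| ≤ R * ‖x‖ :=
  abs_le.mpr ⟨le_infInner fun i => neg_le_of_abs_le (abs_inner_le_of_forall_norm_le hq x i),
    (infInner_le hq x 0).trans (le_of_abs_le (abs_inner_le_of_forall_norm_le hq x 0))⟩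

lemma infInner_le_add (hq : ∀ i, ‖q i‖ ≤ R) (x y : E) :
    infInner q x ≤ infInner q y + R * ‖x - y‖ := by
  have : infInner q x - R * ‖x - y‖ ≤ infInner q y := le_infInner fun i => by
    have hxy := le_of_abs_le (abs_inner_le_of_forall_norm_le hq (x - y) i)
    rw [inner_sub_left] at hxy
    linarith [infInner_le hq x i]
  linarith

lemma continuous_infInner (hq : ∀ i, ‖q i‖ ≤ R) : Continuous (infInner q) :=
  (LipschitzWith.of_le_add_mul' R fun x y => by
    rw [dist_eq_norm]
    exact infInner_le_add hq x y).continuous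

lemma infInner_smul {a : ℝ} (ha : 0 ≤ a) (x : E) : infInner q (a • x) = a * infInner q x := by
  simp only [infInner, real_inner_smul_left, Real.mul_iInf_of_nonneg ha]

lemma infInner_pos {q₀ : E} (hlim : Tendsto q atTop (𝓝 q₀)) (hpos : ∀ i, 0 < ⟪x, q i⟫)
    (hpos₀ : 0 < ⟪x, q₀⟫) : 0 < infInner q x := by
  have hlim' : Tendsto (fun i => ⟪x, q i⟫) atTop (𝓝 ⟪x, q₀⟫) :=
    ((continuous_const.inner continuous_id).tendsto q₀).comp hlim
  have hK := hlim'.isCompact_insert_range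
  have hlb : ∀ i, sInf (insert ⟪x, q₀⟫ (range fun i => ⟪x, q i⟫)) ≤ ⟪x, q i⟫ := fun i =>
    csInf_le hK.bddBelow (mem_insert_of_mem _ (mem_range_self i))
  refine lt_of_lt_of_le ?_ (le_infInner hlb)
  rcases hK.sInf_mem (insert_nonempty _ _) with h | ⟨i, h⟩
  · rw [h]
    exact hpos₀
  · rw [← h]
    exact hpos i

variable [CompleteSpace E] {D : Set E}

lemma infInner_mono (hq : ∀ i, ‖q i‖ ≤ R) (hqD : ∀ i, q i ∈ innerDual D) (hxy : y - x ∈ D) :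
    infInner q x ≤ infInner q y :=
  ciInf_mono (bddBelow_range_inner hq x) fun i => by
    have h := mem_innerDual.mp (hqD i) hxy
    rw [inner_sub_left] at h
    linarith

lemma infInner_nonneg (hqD : ∀ i, q i ∈ innerDual D) (hx : x ∈ D) : 0 ≤ infInner q x :=
  le_infInner fun i => mem_innerDual.mp (hqD i) hx

lemma infInner_eq_zero (hq : ∀ i, ‖q i‖ ≤ R) (hqD : ∀ i, q i ∈ innerDual D) (hx : x ∈ D) {i : ℕ}
    (hi : ⟪x, q i⟫ = 0) : infInner q x = 0 :=
  le_antisymm (hi ▸ infInner_le hq x i) (infInner_nonneg hqD hx)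

end InfInner

def infInnerSeries (q : ℕ → ℕ → E) (x : ℕ → E) (y : E) : E :=
  ∑' j, ((1 / 2 : ℝ) ^ j * infInner (q j) y) • x j

section InfInnerSeries

variable {q : ℕ → ℕ → E} {x : ℕ → E} {R : ℝ} {D : Set E}

lemma norm_infInnerSeries_term_le (hq : ∀ j i, ‖q j i‖ ≤ R) (hx : ∀ j, ‖x j‖ = 1) (j : ℕ)
    (y : E) : ‖((1 / 2 : ℝ) ^ j * infInner (q j) y) • x j‖ ≤ (1 / 2) ^ j * (R * ‖y‖) := by
  rw [norm_smul, hx, mul_one, norm_mul, norm_pow, Real.norm_eq_abs, Real.norm_eq_abs,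
    abs_of_pos (by norm_num : (0 : ℝ) < 1 / 2)]
  exact mul_le_mul_of_nonneg_left (abs_infInner_le (hq j) y) (by positivity)

lemma infInnerSeries_apply_eq_smul {i : ℕ} (hzero : ∀ j, i ≠ j → infInner (q j) (x i) = 0) :
    infInnerSeries q x (x i) = ((1 / 2 : ℝ) ^ i * infInner (q i) (x i)) • x i :=
  tsum_eq_single i fun j hj => by rw [hzero j (Ne.symm hj), mul_zero, zero_smul]

lemma infinite_coneSpectrum_infInnerSeries (hq : ∀ j i, ‖q j i‖ ≤ R) (hx : ∀ j, ‖x j‖ = 1)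
    (hxD : ∀ j, x j ∈ D) (hzero : ∀ i j, i ≠ j → infInner (q j) (x i) = 0)
    (hpos : ∀ j, 0 < infInner (q j) (x j)) : (coneSpectrum D (infInnerSeries q x)).Infinite := by
  set ρ : ℕ → ℝ := fun i => (1 / 2 : ℝ) ^ i * infInner (q i) (x i)
  have hρ : ∀ i, 0 < ρ i := fun i => mul_pos (by positivity) (hpos i)
  have hρle : ∀ i, ρ i ≤ (1 / 2) ^ i * R := fun i => by
    have h := le_of_abs_le (abs_infInner_le (hq i) (x i))
    rw [hx i, mul_one] at h
    exact mul_le_mul_of_nonneg_left h (by positivity)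
  have hlim : Tendsto ρ atTop (𝓝 0) := squeeze_zero (fun i => (hρ i).le) hρle <| by
    simpa using (tendsto_pow_atTop_nhds_zero_of_lt_one (by norm_num : (0 : ℝ) ≤ 1 / 2)
      (by norm_num)).mul_const R
  refine (Set.infinite_range_of_tendsto_of_forall_ne (fun i => (hρ i).ne') hlim).mono ?_
  rintro _ ⟨i, rfl⟩
  exact ⟨(hρ i).le, x i, hxD i, norm_ne_zero_iff.mp (by simp [hx i]),
    infInnerSeries_apply_eq_smul (hzero i)⟩

variable [CompleteSpace E]

lemma summable_infInnerSeries (hq : ∀ j i, ‖q j i‖ ≤ R) (hx : ∀ j, ‖x j‖ = 1) (y : E) :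
    Summable fun j => ((1 / 2 : ℝ) ^ j * infInner (q j) y) • x j :=
  .of_norm_bounded (summable_geometric_two.mul_right (R * ‖y‖))
    (norm_infInnerSeries_term_le hq hx · y)

lemma continuous_infInnerSeries (hq : ∀ j i, ‖q j i‖ ≤ R) (hx : ∀ j, ‖x j‖ = 1) :
    Continuous (infInnerSeries q x) := by
  have hR : 0 ≤ R := (norm_nonneg _).trans (hq 0 0)
  refine continuous_iff_continuousAt.mpr fun y₀ => ?_
  have hon : ContinuousOn (infInnerSeries q x) (Metric.ball 0 (‖y₀‖ + 1)) :=
    continuousOn_tsum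
      (fun j => ((continuous_const.mul (continuous_infInner (hq j))).smul
        continuous_const).continuousOn)
      (summable_geometric_two.mul_right (R * (‖y₀‖ + 1))) fun j y hy => by
        refine (norm_infInnerSeries_term_le hq hx j y).trans ?_
        gcongr
        exact (mem_ball_zero_iff.mp hy).le
  exact hon.continuousAt (Metric.isOpen_ball.mem_nhds (by simp))

lemma mapsTo_infInnerSeries (hD : IsClosedCone D) (hne : D.Nonempty) (hq : ∀ j i, ‖q j i‖ ≤ R)
    (hqD : ∀ j i, q j i ∈ innerDual D) (hx : ∀ j, ‖x j‖ = 1) (hxD : ∀ j, x j ∈ D) :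
    MapsTo (infInnerSeries q x) D D := fun y hy =>
  hD.tsum_mem hne (summable_infInnerSeries hq hx y) fun j =>
    hD.smul_mem (mul_nonneg (by positivity) (infInner_nonneg (hqD j) hy)) (hxD j)

lemma isHomog_infInnerSeries (hq : ∀ j i, ‖q j i‖ ≤ R) (hx : ∀ j, ‖x j‖ = 1) :
    IsHomog D (infInnerSeries q x) := fun a ha y _ => by
  rw [infInnerSeries, infInnerSeries, ← (summable_infInnerSeries hq hx y).tsum_const_smul a]
  congr 1
  funext j
  rw [infInner_smul ha, smul_smul]
  ring_nf

lemma isOrdPres_infInnerSeries (hD : IsClosedCone D) (hne : D.Nonempty)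
    (hq : ∀ j i, ‖q j i‖ ≤ R) (hqD : ∀ j i, q j i ∈ innerDual D) (hx : ∀ j, ‖x j‖ = 1)
    (hxD : ∀ j, x j ∈ D) : IsOrdPres D (infInnerSeries q x) := fun y _ z _ hyz => by
  have hsum := summable_infInnerSeries hq hx
  rw [coneLE, infInnerSeries, infInnerSeries, ← (hsum z).tsum_sub (hsum y)]
  refine hD.tsum_mem hne ((hsum z).sub (hsum y)) fun j => ?_
  rw [← sub_smul, ← mul_sub]
  exact hD.smul_mem (mul_nonneg (by positivity)
    (sub_nonneg.mpr (infInner_mono (hq j) (hqD j) hyz))) (hxD j)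

end InfInnerSeries

section FiniteDimensional

variable [FiniteDimensional ℝ E] {D : Set E} {u : E} {r : ℝ}

lemma isCompact_innerDualBase (hr : 0 < r) (hball : Metric.closedBall u r ⊆ D) :
    IsCompact (innerDualBase D u) :=
  Metric.isCompact_of_isClosed_isBounded
    ((innerDual D).isClosed.inter (isClosed_eq (continuous_const.inner continuous_id)
      continuous_const))
    (isBounded_iff_forall_norm_le.mpr ⟨r⁻¹, fun _ hy => norm_le_of_mem_innerDualBase hr hball hy⟩)

lemma isPolyhedral_of_finite_exposedPoints_innerDualBase (hD : IsClosedCone D) (hr : 0 < r)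
    (hball : Metric.closedBall u r ⊆ D)
    (hfin : ((innerDualBase D u).exposedPoints ℝ).Finite) : IsPolyhedral D := by
  have hhull := (isCompact_innerDualBase hr hball).subset_convexHull_exposedPoints hfin
  have hdual : innerDual ((innerDualBase D u).exposedPoints ℝ) = innerDual (innerDualBase D u) :=
    le_antisymm (innerDual_convexHull (E := E) _ ▸ innerDual_le_innerDual hhull)
      (innerDual_le_innerDual exposedPoints_subset)
  rw [← innerDual_innerDualBase hD hr hball, ← hdual]
  exact isPolyhedral_innerDual_of_finite hfin

lemma exists_infInner_biorthogonal (hD : IsClosedCone D) (hnp : ¬IsPolyhedral D)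
    (hint : (interior D).Nonempty) :
    ∃ (q : ℕ → ℕ → E) (x : ℕ → E) (R : ℝ), (∀ j i, ‖q j i‖ ≤ R) ∧ (∀ j i, q j i ∈ innerDual D) ∧
      (∀ j, ‖x j‖ = 1) ∧ (∀ j, x j ∈ D) ∧ (∀ i j, i ≠ j → infInner (q j) (x i) = 0) ∧
      ∀ j, 0 < infInner (q j) (x j) := by
  obtain ⟨u, hu⟩ := hint
  obtain ⟨r, hr, hball⟩ :=
    Metric.nhds_basis_closedBall.mem_iff.mp (mem_interior_iff_mem_nhds.mp hu)
  set B := innerDualBase D u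
  have hinf : (B.exposedPoints ℝ).Infinite := fun hfin =>
    hnp (isPolyhedral_of_finite_exposedPoints_innerDualBase hD hr hball hfin)
  obtain ⟨v₀, hv₀, v, hv, hvexp, hvne, hlim⟩ :=
    hinf.exists_injective_tendsto_of_isCompact (isCompact_innerDualBase hr hball)
      exposedPoints_subset
  choose p hpD hpv hpB using fun n =>
    exists_mem_inner_eq_zero_of_mem_exposedPoints hD hr hball (hvexp n)
  let q : ℕ → ℕ → E := fun j => Function.update v j v₀
  have hqB : ∀ j i, q j i ∈ B ∧ q j i ≠ v j := fun j i => by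
    rcases eq_or_ne i j with rfl | hij
    · simpa [q, (hvne i).symm] using hv₀
    · simp [q, hij, exposedPoints_subset (hvexp i), hv.ne hij]
  have hqR : ∀ j i, ‖q j i‖ ≤ r⁻¹ := fun j i => norm_le_of_mem_innerDualBase hr hball (hqB j i).1
  have hqD : ∀ j i, q j i ∈ innerDual D := fun j i => (hqB j i).1.1
  have hp0 : ∀ j, p j ≠ 0 := fun j h => by simpa [h] using hpB j v₀ hv₀ (hvne j).symm
  refine ⟨q, fun j => ‖p j‖⁻¹ • p j, r⁻¹, hqR, hqD, fun j => norm_smul_inv_norm (hp0 j),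
    fun j => hD.smul_mem (by positivity) (hpD j), fun i j hij => ?_, fun j => ?_⟩
  · rw [infInner_smul (by positivity), infInner_eq_zero (hqR j) (hqD j) (hpD i) (i := i)
      (by simp [q, hij, hpv i]), mul_zero]
  · have hqlim : Tendsto (q j) atTop (𝓝 v₀) :=
      hlim.congr' ((eventually_ne_atTop j).mono fun i hi => (Function.update_of_ne hi _ _).symm)
    rw [infInner_smul (by positivity)]
    exact mul_pos (by simpa using hp0 j) (infInner_pos hqlim
      (fun i => hpB j _ (hqB j i).1 (hqB j i).2) (hpB j v₀ hv₀ (hvne j).symm))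

theorem InnerProductSpace.exists_infinite_coneSpectrum_of_not_polyhedral (hD : IsClosedCone D)
    (hnp : ¬IsPolyhedral D) (hint : (interior D).Nonempty) :
    ∃ f : E → E, MapsTo f D D ∧ ContinuousOn f D ∧ IsHomog D f ∧ IsOrdPres D f ∧
      (coneSpectrum D f).Infinite := by
  have hne : D.Nonempty := hint.mono interior_subset
  obtain ⟨q, x, R, hq, hqD, hx, hxD, hzero, hpos⟩ := exists_infInner_biorthogonal hD hnp hint
  exact ⟨infInnerSeries q x, mapsTo_infInnerSeries hD hne hq hqD hx hxD,
    (continuous_infInnerSeries hq hx).continuousOn, isHomog_infInnerSeries hq hx,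
    isOrdPres_infInnerSeries hD hne hq hqD hx hxD,
    infinite_coneSpectrum_infInnerSeries hq hx hxD hzero hpos⟩

end FiniteDimensional

end InnerProductSpace

section LinearEquiv

variable {F G : Type*} [NormedAddCommGroup F] [NormedSpace ℝ F] [NormedAddCommGroup G]
  [NormedSpace ℝ G] (e : F ≃L[ℝ] G) {C : Set G}

lemma IsClosedCone.preimage (hC : IsClosedCone C) : IsClosedCone (e ⁻¹' C) :=
  ⟨hC.1.preimage e.continuous, hC.2.1.linear_preimage (e : F →ₗ[ℝ] G),
    fun a ha x hx => by simpa using hC.smul_mem ha hx,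
    fun x hx hnx => e.injective (by simpa using hC.2.2.2 (e x) hx (by simpa using hnx))⟩

lemma IsPolyhedral.of_preimage (h : IsPolyhedral (e ⁻¹' C)) : IsPolyhedral C := by
  obtain ⟨m, φ, hφ⟩ := h
  refine ⟨m, fun i => (φ i).comp (e.symm : G →ₗ[ℝ] F), ?_⟩
  ext y
  simpa using Set.ext_iff.mp hφ (e.symm y)

lemma IsHomog.conj {g : F → F} (hg : IsHomog (e ⁻¹' C) g) : IsHomog C (e ∘ g ∘ e.symm) :=
  fun a ha y hy => by
    simp only [Function.comp_apply, map_smul]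
    rw [hg a ha _ (by simpa using hy), map_smul]

lemma IsOrdPres.conj {g : F → F} (hg : IsOrdPres (e ⁻¹' C) g) : IsOrdPres C (e ∘ g ∘ e.symm) :=
  fun y hy z hz hyz => by
    simpa [coneLE] using hg (e.symm y) (by simpa using hy) (e.symm z) (by simpa using hz)
      (by simpa [coneLE] using hyz)

lemma coneSpectrum_conj (g : F → F) :
    coneSpectrum C (e ∘ g ∘ e.symm) = coneSpectrum (e ⁻¹' C) g := by
  ext ρ
  constructor
  · rintro ⟨hρ, y, hy, hy0, hgy⟩
    exact ⟨hρ, e.symm y, by simpa using hy, by simpa using hy0,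
      e.injective (by simpa using hgy)⟩
  · rintro ⟨hρ, x, hx, hx0, hgx⟩
    exact ⟨hρ, e x, hx, by simpa using hx0, by simp [hgx]⟩

end LinearEquiv

/-- On every closed non-polyhedral cone with non-empty interior in a finite dimensional
real vector space there exists a continuous order-preserving homogeneous map with
infinitely many distinct eigenvalues, i.e. with infinite cone spectrum. -/
theorem exists_infinite_coneSpectrum_of_not_polyhedral
    (C : Set V) (hC : IsClosedCone C) (hnonpoly : ¬IsPolyhedral C)
    (hint : (interior C).Nonempty) :
    ∃ f : V → V, Set.MapsTo f C C ∧ ContinuousOn f C ∧ IsHomog C f ∧ IsOrdPres C f ∧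
      (coneSpectrum C f).Infinite := by
  let e : EuclideanSpace ℝ (Fin (Module.finrank ℝ V)) ≃L[ℝ] V := toEuclidean.symm
  have hint' : (interior (e ⁻¹' C)).Nonempty :=
    (hint.preimage e.surjective).mono (preimage_interior_subset_interior_preimage e.continuous)
  obtain ⟨g, hmaps, hcont, hhom, hord, hspec⟩ :=
    InnerProductSpace.exists_infinite_coneSpectrum_of_not_polyhedral (hC.preimage e)
      (fun h => hnonpoly (h.of_preimage e)) hint'
  refine ⟨e ∘ g ∘ e.symm, fun x hx => hmaps (by simpa using hx), ?_, hhom.conj e, hord.conj e,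
    coneSpectrum_conj e g ▸ hspec⟩
  exact e.continuous.comp_continuousOn
    (hcont.comp e.symm.continuous.continuousOn fun x hx => by simpa using hx)
end
end
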